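/- Let p ∈ ℂ[x, y] be a polynomial satisfying y·(∂p/∂x) + ∂p/∂y = 0. Then there exists a single-variable polynomial q ∈ ℂ[T] such that p(x, y) = q(y² − 2x). -/

import Mathlib

/-!
The substitution `x ↦ (y² - x) / 2`, `y ↦ y` conjugates `y ∂ₓ + ∂_y` into `∂_y` (chain rule), and
the substitution `x ↦ y² - 2x`, `y ↦ y` undoes it. In characteristic zero a polynomial killed by
`∂_y` is a polynomial `q(x)`, so undoing the substitution gives `p = q(y² - 2x)`.
-/

theorem Polynomial.Bivariate.equivMvPolynomial_C {R : Type*} [CommRing R] (q : Polynomial R) :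
    equivMvPolynomial R (Polynomial.C q) = Polynomial.aeval (MvPolynomial.X 0) q := by
  induction q using Polynomial.induction_on' with
  | add a b ha hb => simp only [map_add, ha, hb]
  | monomial n a =>
    simp only [← Polynomial.C_mul_X_pow_eq_monomial, map_mul, map_pow, Polynomial.aeval_C,
      Polynomial.aeval_X, equivMvPolynomial_C_C, equivMvPolynomial_C_X,
      MvPolynomial.algebraMap_eq]

namespace MvPolynomial

theorem derivation_aeval {σ R A M : Type*} [Fintype σ] [CommSemiring R] [CommSemiring A]
    [Algebra R A] [AddCommMonoid M] [Module A M] [Module R M] [IsScalarTower R A M]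
    (D : Derivation R A M) (f : σ → A) (p : MvPolynomial σ R) :
    D (aeval f p) = ∑ i, aeval f (pderiv i p) • D (f i) := by
  induction p using MvPolynomial.induction_on with
  | C a => simp
  | add p q hp hq => simp only [map_add, hp, hq, add_smul, Finset.sum_add_distrib]
  | mul_X p j hp =>
    have hX : ∑ i, aeval f (pderiv i (X j : MvPolynomial σ R)) • D (f i) = D (f j) := by
      rw [Finset.sum_eq_single j (fun i _ hij => by simp [pderiv_X_of_ne hij.symm])
        (by simp)]
      simp
    simp only [map_mul, aeval_X, Derivation.leibniz, hp, map_add, smul_eq_mul, add_smul,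
      Finset.sum_add_distrib, mul_smul, Finset.smul_sum, ← hX]

theorem exists_eq_aeval_X_zero_of_pderiv_one_eq_zero {R : Type*} [CommRing R] [IsDomain R]
    [CharZero R] {p : MvPolynomial (Fin 2) R} (h : pderiv 1 p = 0) :
    ∃ q : Polynomial R, p = Polynomial.aeval (X 0) q := by
  set e := Polynomial.Bivariate.equivMvPolynomial R
  have hd : Polynomial.derivative (e.symm p) = 0 := by
    apply e.injective
    rw [← Polynomial.Bivariate.pderiv_one_equivMvPolynomial, e.apply_symm_apply, h, map_zero]
  refine ⟨(e.symm p).coeff 0, ?_⟩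
  rw [← Polynomial.Bivariate.equivMvPolynomial_C, ← Polynomial.eq_C_of_derivative_eq_zero hd,
    e.apply_symm_apply]

section FlowCoordinates

variable (R : Type*) [CommRing R] [Invertible (2 : R)]

noncomputable def toFlowCoords : MvPolynomial (Fin 2) R →ₐ[R] MvPolynomial (Fin 2) R :=
  aeval ![(⅟2 : R) • (X 1 ^ 2 - X 0), X 1]

noncomputable def ofFlowCoords : MvPolynomial (Fin 2) R →ₐ[R] MvPolynomial (Fin 2) R :=
  aeval ![X 1 ^ 2 - 2 * X 0, X 1]

variable {R}

theorem C_invOf_two_mul_two {σ : Type*} : (C (⅟2 : R) : MvPolynomial σ R) * 2 = 1 := by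
  rw [← map_ofNat C, ← C_mul, invOf_mul_self, C_1]

theorem pderiv_one_toFlowCoords (p : MvPolynomial (Fin 2) R) :
    pderiv 1 (toFlowCoords R p) = toFlowCoords R (X 1 * pderiv 0 p + pderiv 1 p) := by
  have hx : pderiv 1 ((⅟2 : R) • (X 1 ^ 2 - X 0) : MvPolynomial (Fin 2) R) = X 1 := by
    rw [smul_eq_C_mul, pderiv_C_mul, map_sub, pderiv_pow, pderiv_X_self,
      pderiv_X_of_ne zero_ne_one]
    linear_combination X 1 * C_invOf_two_mul_two (R := R)
  rw [toFlowCoords, derivation_aeval, Fin.sum_univ_two]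
  simp [hx, mul_comm]

theorem ofFlowCoords_toFlowCoords (p : MvPolynomial (Fin 2) R) :
    ofFlowCoords R (toFlowCoords R p) = p := by
  suffices (ofFlowCoords R).comp (toFlowCoords R) = AlgHom.id R _ from DFunLike.congr_fun this p
  refine algHom_ext (Fin.forall_fin_two.2 ⟨?_, ?_⟩)
  · simp only [AlgHom.comp_apply, AlgHom.id_apply, toFlowCoords, ofFlowCoords, aeval_X,
      Matrix.cons_val_zero, Matrix.cons_val_one, smul_eq_C_mul, map_mul, map_sub, map_pow,
      aeval_C, algebraMap_eq]
    linear_combination X 0 * C_invOf_two_mul_two (R := R)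
  · simp [toFlowCoords, ofFlowCoords]

end FlowCoordinates

end MvPolynomial

open MvPolynomial in
theorem kernel_of_derivation_y_dx_plus_dy (p : MvPolynomial (Fin 2) ℂ)
    (h : X 1 * pderiv 0 p + pderiv 1 p = 0) :
    ∃ q : Polynomial ℂ,
      p = Polynomial.aeval ((X 1 : MvPolynomial (Fin 2) ℂ) ^ 2 - 2 * X 0) q := by
  have hstraight : pderiv 1 (toFlowCoords ℂ p) = 0 := by
    rw [pderiv_one_toFlowCoords, h, map_zero]
  obtain ⟨q, hq⟩ := exists_eq_aeval_X_zero_of_pderiv_one_eq_zero hstraight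
  refine ⟨q, ?_⟩
  calc p = ofFlowCoords ℂ (toFlowCoords ℂ p) := (ofFlowCoords_toFlowCoords p).symm
    _ = ofFlowCoords ℂ (Polynomial.aeval (X 0) q) := by rw [hq]
    _ = Polynomial.aeval (X 1 ^ 2 - 2 * X 0) q := by
      rw [← Polynomial.aeval_algHom_apply, ofFlowCoords, aeval_X, Matrix.cons_val_zero]
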